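/- arXiv:1912.11138 — 7 statements merged into one kernel-verified Lean document; each statement's English description precedes it below -/
import Mathlib

section
/- Let X be a separable real Hilbert space, T > 0, and z ∈ L²(0,T;X). Then the POD operator R : X → X defined by Rφ := ∫₀ᵀ ⟨z(t), φ⟩ z(t) dt is a bounded linear operator that is self-adjoint (⟨Rφ, ψ⟩ = ⟨φ, Rψ⟩ for all φ, ψ ∈ X), nonnegative (⟨Rφ, φ⟩ ≥ 0 for all φ ∈ X), and compact. -/
open MeasureTheory
open scoped RealInnerProductSpace ENNReal

section podHelpers

variable {X : Type*} [NormedAddCommGroup X] [InnerProductSpace ℝ X] [CompleteSpace X]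
  {μ : Measure ℝ}

private lemma pod_inner_aesm {u : ℝ → X} (hu : MemLp u 2 μ) (φ : X) :
    AEStronglyMeasurable (fun t => ⟪u t, φ⟫) μ :=
  hu.1.inner aestronglyMeasurable_const

private lemma pod_inner_memLp {u : ℝ → X} (hu : MemLp u 2 μ) (φ : X) :
    MemLp (fun t => ⟪u t, φ⟫) 2 μ := by
  refine hu.of_le_mul (c := ‖φ‖) (pod_inner_aesm hu φ) (Filter.Eventually.of_forall fun t => ?_)
  rw [Real.norm_eq_abs]
  calc |⟪u t, φ⟫| ≤ ‖u t‖ * ‖φ‖ := abs_real_inner_le_norm _ _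
    _ = ‖φ‖ * ‖u t‖ := mul_comm _ _

private lemma pod_integrable {u v : ℝ → X} (hu : MemLp u 2 μ) (hv : MemLp v 2 μ) (φ : X) :
    Integrable (fun t => ⟪u t, φ⟫ • v t) μ := by
  rw [← memLp_one_iff_integrable]
  exact hv.smul (pod_inner_memLp hu φ)

private lemma pod_norm_bound {u v : ℝ → X} (hu : MemLp u 2 μ) (hv : MemLp v 2 μ) (φ : X) :
    ‖∫ t, ⟪u t, φ⟫ • v t ∂μ‖ ≤ (eLpNorm u 2 μ).toReal * (eLpNorm v 2 μ).toReal * ‖φ‖ := by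
  have hb : (‖∫ t, ⟪u t, φ⟫ • v t ∂μ‖₊ : ℝ≥0∞) ≤
      (‖φ‖₊ * eLpNorm u 2 μ) * eLpNorm v 2 μ := by
    calc (‖∫ t, ⟪u t, φ⟫ • v t ∂μ‖₊ : ℝ≥0∞)
        ≤ ∫⁻ t, ‖⟪u t, φ⟫ • v t‖₊ ∂μ := enorm_integral_le_lintegral_enorm _
      _ = eLpNorm ((fun t => ⟪u t, φ⟫) • v) 1 μ := (eLpNorm_one_eq_lintegral_enorm (f := (fun t => ⟪u t, φ⟫) • v)).symm
      _ ≤ eLpNorm (fun t => ⟪u t, φ⟫) 2 μ * eLpNorm v 2 μ :=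
          eLpNorm_smul_le_mul_eLpNorm hv.1 (pod_inner_aesm hu φ)
      _ ≤ (‖φ‖₊ * eLpNorm u 2 μ) * eLpNorm v 2 μ := by
          gcongr
          have h := eLpNorm_le_nnreal_smul_eLpNorm_of_ae_le_mul (μ := μ)
            (f := fun t => ⟪u t, φ⟫) (g := u) (c := ‖φ‖₊)
            (Filter.Eventually.of_forall fun t => ?_) 2
          · simpa [ENNReal.smul_def] using h
          · rw [← NNReal.coe_le_coe]
            push_cast
            rw [Real.norm_eq_abs]
            calc |⟪u t, φ⟫| ≤ ‖u t‖ * ‖φ‖ := abs_real_inner_le_norm _ _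
              _ = ‖φ‖ * ‖u t‖ := mul_comm _ _
  have hfin : (‖φ‖₊ * eLpNorm u 2 μ) * eLpNorm v 2 μ ≠ ∞ :=
    ENNReal.mul_ne_top (ENNReal.mul_ne_top ENNReal.coe_ne_top hu.2.ne) hv.2.ne
  have h2 := ENNReal.toReal_mono hfin hb
  rw [ENNReal.toReal_mul, ENNReal.toReal_mul] at h2
  simp only [ENNReal.coe_toReal, coe_nnnorm] at h2
  calc ‖∫ t, ⟪u t, φ⟫ • v t ∂μ‖ = (↑‖∫ t, ⟪u t, φ⟫ • v t ∂μ‖₊ : ℝ≥0∞).toReal := by simp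
    _ ≤ ‖φ‖ * (eLpNorm u 2 μ).toReal * (eLpNorm v 2 μ).toReal := h2
    _ = (eLpNorm u 2 μ).toReal * (eLpNorm v 2 μ).toReal * ‖φ‖ := by ring

/-- The POD-type operator `φ ↦ ∫ ⟪u t, φ⟫ • v t ∂μ`. -/
noncomputable def podOp (u v : ℝ → X) (hu : MemLp u 2 μ) (hv : MemLp v 2 μ) : X →L[ℝ] X :=
  LinearMap.mkContinuous
    { toFun := fun φ => ∫ t, ⟪u t, φ⟫ • v t ∂μ
      map_add' := fun φ ψ => by
        rw [← integral_add (pod_integrable hu hv φ) (pod_integrable hu hv ψ)]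
        refine integral_congr_ae (Filter.Eventually.of_forall fun t => ?_)
        simp only [inner_add_right, add_smul]
      map_smul' := fun c φ => by
        simp only [RingHom.id_apply]
        rw [← integral_smul]
        refine integral_congr_ae (Filter.Eventually.of_forall fun t => ?_)
        simp only [inner_smul_right, smul_smul] }
    ((eLpNorm u 2 μ).toReal * (eLpNorm v 2 μ).toReal)
    (pod_norm_bound hu hv)

lemma podOp_apply (u v : ℝ → X) (hu : MemLp u 2 μ) (hv : MemLp v 2 μ) (φ : X) :
    podOp u v hu hv φ = ∫ t, ⟪u t, φ⟫ • v t ∂μ := rfl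

lemma podOp_norm_le (u v : ℝ → X) (hu : MemLp u 2 μ) (hv : MemLp v 2 μ) :
    ‖podOp u v hu hv‖ ≤ (eLpNorm u 2 μ).toReal * (eLpNorm v 2 μ).toReal :=
  LinearMap.mkContinuous_norm_le _ (by positivity) _

lemma podOp_inner (u v : ℝ → X) (hu : MemLp u 2 μ) (hv : MemLp v 2 μ) (φ ψ : X) :
    ⟪podOp u v hu hv φ, ψ⟫ = ∫ t, ⟪u t, φ⟫ * ⟪v t, ψ⟫ ∂μ := by
  rw [real_inner_comm, podOp_apply, ← integral_inner (pod_integrable hu hv φ)]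
  refine integral_congr_ae (Filter.Eventually.of_forall fun t => ?_)
  simp only [inner_smul_right, real_inner_comm ψ (v t)]

lemma podOp_simple_isCompact (g : SimpleFunc ℝ X) (hg : MemLp g 2 μ) :
    IsCompactOperator (podOp (μ := μ) g g hg hg) := by
  set R := podOp (μ := μ) g g hg hg with hR
  set V : Submodule ℝ X := Submodule.span ℝ (Set.range g) with hV
  haveI : FiniteDimensional ℝ V := FiniteDimensional.span_of_finite ℝ g.finite_range
  haveI : ProperSpace V := FiniteDimensional.proper ℝ V
  have hmem : ∀ φ : X, R φ ∈ V := by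
    intro φ
    set L : X →L[ℝ] X := V.subtypeL.comp V.orthogonalProjectionOnto with hL
    have hLid : ∀ x ∈ V, L x = x := by
      intro x hx
      rw [hL]; exact congrArg Subtype.val (V.orthogonalProjectionOnto_mem_subspace_eq_self ⟨x, hx⟩)
    have hLV : ∀ x, L x ∈ V := fun x => SetLike.coe_mem _
    have key : R φ = L (R φ) := by
      rw [hR, podOp_apply, ← L.integral_comp_comm (pod_integrable hg hg φ)]
      refine integral_congr_ae (Filter.Eventually.of_forall fun t => ?_)
      exact (hLid _ (V.smul_mem _ (Submodule.subset_span (Set.mem_range_self t)))).symm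
    rw [key]; exact hLV _
  refine ⟨V.subtypeL '' Metric.closedBall 0 ‖R‖, ?_, ?_⟩
  · exact (isCompact_closedBall _ _).image V.subtypeL.continuous
  · refine Filter.mem_of_superset (Metric.ball_mem_nhds 0 one_pos) ?_
    intro φ hφ
    have h1 : ‖R φ‖ ≤ ‖R‖ := by
      calc ‖R φ‖ ≤ ‖R‖ * ‖φ‖ := R.le_opNorm φ
        _ ≤ ‖R‖ * 1 := by
            have : ‖φ‖ ≤ 1 := le_of_lt (by simpa using hφ)
            exact mul_le_mul_of_nonneg_left this (norm_nonneg _)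
        _ = ‖R‖ := mul_one _
    exact ⟨⟨R φ, hmem φ⟩, by simpa [Metric.mem_closedBall, dist_zero_right, Submodule.coe_norm] using h1, rfl⟩

end podHelpers

section podCompact

variable {X : Type*} [NormedAddCommGroup X] [InnerProductSpace ℝ X] [CompleteSpace X]
  {μ : Measure ℝ}

lemma podOp_decomp {z g : ℝ → X} (hz : MemLp z 2 μ) (hg : MemLp g 2 μ) :
    podOp z z hz hz = podOp (z - g) z (hz.sub hg) hz + podOp g (z - g) hg (hz.sub hg)
      + podOp g g hg hg := by
  ext φ
  simp only [ContinuousLinearMap.add_apply, podOp_apply]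
  have hAB : Integrable (fun t => ⟪(z - g) t, φ⟫ • z t + ⟪g t, φ⟫ • (z - g) t) μ :=
    (pod_integrable (hz.sub hg) hz φ).add (pod_integrable hg (hz.sub hg) φ)
  rw [← integral_add (pod_integrable (hz.sub hg) hz φ) (pod_integrable hg (hz.sub hg) φ),
    ← integral_add hAB (pod_integrable hg hg φ)]
  refine integral_congr_ae (Filter.Eventually.of_forall fun t => ?_)
  simp only [Pi.sub_apply, inner_sub_left, sub_smul, smul_sub]
  abel

lemma podOp_isCompact (z : ℝ → X) (hz : MemLp z 2 μ) :
    IsCompactOperator (podOp z z hz hz) := by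
  set Z : ℝ := (eLpNorm z 2 μ).toReal with hZ
  have hZ0 : 0 ≤ Z := ENNReal.toReal_nonneg
  have hC : ∀ n : ℕ, ∃ Rc : X →L[ℝ] X, IsCompactOperator Rc ∧
      ‖podOp z z hz hz - Rc‖ ≤ (1 / (n + 1)) * (2 * Z + 1) := by
    intro n
    have hpos : (0 : ℝ) < 1 / (n + 1) := by positivity
    have hn1 : (1 : ℝ) ≤ (n : ℝ) + 1 := by
      have : (0 : ℝ) ≤ (n : ℝ) := Nat.cast_nonneg n
      linarith
    have hle1 : (1 : ℝ) / (n + 1) ≤ 1 := by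
      rw [div_le_one (Nat.cast_add_one_pos n)]
      exact hn1
    have hε : (ENNReal.ofReal (1 / (n + 1)) : ℝ≥0∞) ≠ 0 := by
      simp only [ne_eq, ENNReal.ofReal_eq_zero, not_le]
      exact hpos
    obtain ⟨g, hgs, hgm⟩ := hz.exists_simpleFunc_eLpNorm_sub_lt (by norm_num) hε
    have hsub : MemLp (z - ⇑g) 2 μ := hz.sub hgm
    set d : ℝ := (eLpNorm (z - ⇑g) 2 μ).toReal with hd'
    have hd0 : 0 ≤ d := ENNReal.toReal_nonneg
    have hd : d ≤ 1 / (n + 1) := by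
      calc d ≤ (ENNReal.ofReal (1 / (n + 1))).toReal :=
            ENNReal.toReal_mono ENNReal.ofReal_ne_top hgs.le
        _ = 1 / (n + 1) := ENNReal.toReal_ofReal hpos.le
    set G : ℝ := (eLpNorm (⇑g) 2 μ).toReal with hG'
    have hG0 : 0 ≤ G := ENNReal.toReal_nonneg
    have hG : G ≤ Z + d := by
      have h1 : eLpNorm (⇑g) 2 μ ≤ eLpNorm z 2 μ + eLpNorm (z - ⇑g) 2 μ := by
        have heq : (⇑g) = z - (z - ⇑g) := by ext t; simp
        calc eLpNorm (⇑g) 2 μ = eLpNorm (z - (z - ⇑g)) 2 μ := by rw [← heq]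
          _ ≤ eLpNorm z 2 μ + eLpNorm (z - ⇑g) 2 μ :=
              eLpNorm_sub_le hz.1 hsub.1 one_le_two
      have h2 := ENNReal.toReal_mono (ENNReal.add_ne_top.mpr ⟨hz.2.ne, hsub.2.ne⟩) h1
      rwa [ENNReal.toReal_add hz.2.ne hsub.2.ne] at h2
    refine ⟨podOp (⇑g) (⇑g) hgm hgm, podOp_simple_isCompact g hgm, ?_⟩
    have hdiff : podOp z z hz hz - podOp (⇑g) (⇑g) hgm hgm
        = podOp (z - ⇑g) z hsub hz + podOp (⇑g) (z - ⇑g) hgm hsub := by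
      rw [podOp_decomp hz hgm]; abel
    have hn1 : ‖podOp (z - ⇑g) z hsub hz‖ ≤ d * Z := podOp_norm_le _ _ _ _
    have hn2 : ‖podOp (⇑g) (z - ⇑g) hgm hsub‖ ≤ G * d := podOp_norm_le _ _ _ _
    calc ‖podOp z z hz hz - podOp (⇑g) (⇑g) hgm hgm‖
        ≤ ‖podOp (z - ⇑g) z hsub hz‖ + ‖podOp (⇑g) (z - ⇑g) hgm hsub‖ := by
          rw [hdiff]; exact norm_add_le _ _
      _ ≤ (1 / (n + 1)) * (2 * Z + 1) := by nlinarith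
  choose F hFc hFn using hC
  have htend : Filter.Tendsto F Filter.atTop (nhds (podOp z z hz hz)) := by
    rw [tendsto_iff_norm_sub_tendsto_zero]
    refine squeeze_zero (g := fun n : ℕ => (1 / (n + 1)) * (2 * Z + 1))
      (fun n => norm_nonneg _) (fun n => by rw [norm_sub_rev]; exact hFn n) ?_
    have := tendsto_one_div_add_atTop_nhds_zero_nat.mul_const (2 * Z + 1)
    simpa using this
  exact isCompactOperator_of_tendsto htend (Filter.Eventually.of_forall hFc)

end podCompact

/-- For a separable real Hilbert space `X`, `T > 0` and
`z ∈ L²(0,T;X)`, the POD operator `R φ = ∫₀ᵀ ⟪z t, φ⟫ • z t dt` is a bounded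
linear operator on `X` which is self-adjoint, nonnegative and compact. -/
theorem pod_operator_bounded_selfAdjoint_nonneg_compact
    {X : Type*} [NormedAddCommGroup X] [InnerProductSpace ℝ X] [CompleteSpace X]
    [TopologicalSpace.SeparableSpace X]
    (T : ℝ) (hT : 0 < T) (z : ℝ → X)
    (hz : MemLp z 2 (volume.restrict (Set.Ioo 0 T))) :
    ∃ R : X →L[ℝ] X,
      (∀ φ : X, R φ = ∫ t in Set.Ioo 0 T, ⟪z t, φ⟫ • z t) ∧
      (∀ φ ψ : X, ⟪R φ, ψ⟫ = ⟪φ, R ψ⟫) ∧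
      (∀ φ : X, 0 ≤ ⟪R φ, φ⟫) ∧
      IsCompactOperator R := by
  refine ⟨podOp z z hz hz, fun φ => rfl, ?_, ?_, podOp_isCompact z hz⟩
  · intro φ ψ
    rw [podOp_inner, real_inner_comm, podOp_inner]
    refine integral_congr_ae (Filter.Eventually.of_forall fun t => ?_)
    ring
  · intro φ
    rw [podOp_inner]
    exact integral_nonneg fun t => mul_self_nonneg _
end

section
/- Let X be a separable real Hilbert space and Y a real Banach space continuously embedded in X (via an injective continuous linear map; we identify Y with a subspace of X). Let z ∈ L²(0,T;X) be such that z(t) ∈ Y for almost every t and the Y-valued function t ↦ z(t) belongs to L²(0,T;Y). If φ ∈ X satisfies ‖φ‖_X = 1 and Rφ = λφ for some λ > 0 (R the POD operator of z), then φ ∈ Y and ‖φ‖_Y ≤ (1/(2λ)) (‖z‖²_{L²(0,T;X)} + ‖z‖²_{L²(0,T;Y)}). -/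
open MeasureTheory
open scoped RealInnerProductSpace

/-- Let `X` be a separable real Hilbert space and `Y` a real
Banach space continuously embedded in `X` via an injective continuous linear
map `J`. Let `z ∈ L²(0,T;X)` take values in `Y` a.e. with `Y`-valued
representative `zY ∈ L²(0,T;Y)`. If `φ` is a unit eigenvector of the POD
operator of `z` with eigenvalue `λ > 0`, then `φ ∈ Y` (i.e. `φ = J ψ` for some
`ψ ∈ Y`) with `‖ψ‖_Y ≤ (1/(2λ)) (‖z‖²_{L²(0,T;X)} + ‖z‖²_{L²(0,T;Y)})`. -/
theorem pod_eigenvector_mem_embedded_space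
    {X Y : Type*} [NormedAddCommGroup X] [InnerProductSpace ℝ X] [CompleteSpace X]
    [TopologicalSpace.SeparableSpace X]
    [NormedAddCommGroup Y] [NormedSpace ℝ Y] [CompleteSpace Y]
    (J : Y →L[ℝ] X) (hJinj : Function.Injective J)
    (T : ℝ) (z : ℝ → X) (zY : ℝ → Y)
    (hz : MemLp z 2 (volume.restrict (Set.Ioo 0 T)))
    (hzY : MemLp zY 2 (volume.restrict (Set.Ioo 0 T)))
    (hJz : ∀ᵐ t ∂(volume.restrict (Set.Ioo 0 T)), J (zY t) = z t)
    (φ : X) (lam : ℝ) (hlam : 0 < lam) (hφ : ‖φ‖ = 1)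
    (heig : (∫ t in Set.Ioo 0 T, ⟪z t, φ⟫ • z t) = lam • φ) :
    ∃ ψ : Y, J ψ = φ ∧
      ‖ψ‖ ≤ (1 / (2 * lam)) *
        ((∫ t in Set.Ioo 0 T, ‖z t‖ ^ 2) + ∫ t in Set.Ioo 0 T, ‖zY t‖ ^ 2) := by
  set μ := volume.restrict (Set.Ioo (0:ℝ) T)
  -- the coefficient function is in L²
  have hg : MemLp (fun t => (⟪z t, φ⟫ : ℝ)) 2 μ := by
    have := ((innerSL ℝ (E := X)).flip φ).comp_memLp' hz
    exact this
  -- integrability of the Y-valued integrand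
  have hint : Integrable (fun t => (⟪z t, φ⟫ : ℝ) • zY t) μ := by
    have : MemLp (fun t => (⟪z t, φ⟫ : ℝ) • zY t) 1 μ := by
      have := hzY.smul hg (p := 2) (q := 2) (r := 1) (hpqr := ⟨by simp [ENNReal.inv_two_add_inv_two]⟩)
      exact this
    exact this.integrable le_rfl
  set ψ : Y := lam⁻¹ • ∫ t, (⟪z t, φ⟫ : ℝ) • zY t ∂μ with hψ
  have hJψ : J ψ = φ := by
    have h1 : J (∫ t, (⟪z t, φ⟫ : ℝ) • zY t ∂μ) = ∫ t, J ((⟪z t, φ⟫ : ℝ) • zY t) ∂μ :=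
      (ContinuousLinearMap.integral_comp_comm J hint).symm
    have h2 : (∫ t, J ((⟪z t, φ⟫ : ℝ) • zY t) ∂μ) = ∫ t, (⟪z t, φ⟫ : ℝ) • z t ∂μ := by
      refine integral_congr_ae ?_
      filter_upwards [hJz] with t ht
      simp [ht]
    have h3 : (∫ t, (⟪z t, φ⟫ : ℝ) • z t ∂μ) = lam • φ := heig
    rw [hψ, J.map_smul, h1, h2, h3, smul_smul, inv_mul_cancel₀ hlam.ne', one_smul]
  refine ⟨ψ, hJψ, ?_⟩
  -- integrability of the squared norms
  have hz2 : Integrable (fun t => ‖z t‖ ^ 2) μ := by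
    have := hz.integrable_norm_rpow (by norm_num) (by norm_num)
    simpa [ENNReal.toReal_ofNat, Real.rpow_natCast] using this
  have hzY2 : Integrable (fun t => ‖zY t‖ ^ 2) μ := by
    have := hzY.integrable_norm_rpow (by norm_num) (by norm_num)
    simpa [ENNReal.toReal_ofNat, Real.rpow_natCast] using this
  have hbound : ‖∫ t, (⟪z t, φ⟫ : ℝ) • zY t ∂μ‖
      ≤ (1 / 2) * ((∫ t, ‖z t‖ ^ 2 ∂μ) + ∫ t, ‖zY t‖ ^ 2 ∂μ) := by
    calc ‖∫ t, (⟪z t, φ⟫ : ℝ) • zY t ∂μ‖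
        ≤ ∫ t, ‖(⟪z t, φ⟫ : ℝ) • zY t‖ ∂μ := norm_integral_le_integral_norm _
      _ ≤ ∫ t, (1 / 2) * (‖z t‖ ^ 2 + ‖zY t‖ ^ 2) ∂μ := by
          refine integral_mono_of_nonneg (ae_of_all μ fun t => norm_nonneg _)
            ((hz2.add hzY2).const_mul _) (ae_of_all μ fun t => ?_)
          have hcs : |(⟪z t, φ⟫ : ℝ)| ≤ ‖z t‖ := by
            calc |(⟪z t, φ⟫ : ℝ)| ≤ ‖z t‖ * ‖φ‖ := abs_real_inner_le_norm _ _
              _ = ‖z t‖ := by rw [hφ, mul_one]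
          have h1 : ‖(⟪z t, φ⟫ : ℝ) • zY t‖ ≤ ‖z t‖ * ‖zY t‖ := by
            rw [norm_smul, Real.norm_eq_abs]
            exact mul_le_mul_of_nonneg_right hcs (norm_nonneg _)
          have h2 : ‖z t‖ * ‖zY t‖ ≤ (1 / 2) * (‖z t‖ ^ 2 + ‖zY t‖ ^ 2) := by
            nlinarith [sq_nonneg (‖z t‖ - ‖zY t‖)]
          exact h1.trans h2
      _ = (1 / 2) * ((∫ t, ‖z t‖ ^ 2 ∂μ) + ∫ t, ‖zY t‖ ^ 2 ∂μ) := by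
          rw [integral_const_mul, integral_add hz2 hzY2]
  have : ‖ψ‖ = lam⁻¹ * ‖∫ t, (⟪z t, φ⟫ : ℝ) • zY t ∂μ‖ := by
    rw [hψ, norm_smul, Real.norm_eq_abs, abs_of_pos (inv_pos.mpr hlam)]
  rw [this]
  have h4 : lam⁻¹ * ((1 / 2) * ((∫ t, ‖z t‖ ^ 2 ∂μ) + ∫ t, ‖zY t‖ ^ 2 ∂μ))
      = (1 / (2 * lam)) * ((∫ t, ‖z t‖ ^ 2 ∂μ) + ∫ t, ‖zY t‖ ^ 2 ∂μ) := by
    rw [one_div, one_div, mul_inv]; ring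
  calc lam⁻¹ * ‖∫ t, (⟪z t, φ⟫ : ℝ) • zY t ∂μ‖
      ≤ lam⁻¹ * ((1 / 2) * ((∫ t, ‖z t‖ ^ 2 ∂μ) + ∫ t, ‖zY t‖ ^ 2 ∂μ)) :=
        mul_le_mul_of_nonneg_left hbound (inv_nonneg.mpr hlam.le)
    _ = _ := h4
end

section
/- Let X be a real Hilbert space, r ∈ ℕ, and q₁, …, q_r ∈ ℕ. Given vectors ψ₁, …, ψ_r ∈ X, continuous linear maps A_i : ℝ^{q_i} → X, scalars c₁, …, c_r ∈ ℝ, and b ∈ X, define the residual R(x, η) := Σ_{i=1}^r x_i ψ_i + Σ_{i=1}^r c_i A_i(η_i) − b for x ∈ ℝ^r and η = (η₁, …, η_r) ∈ ℝ^{q₁} × … × ℝ^{q_r}. If (x*, η*) satisfies the normal (Galerkin) equations ⟨ψ_ℓ, R(x*, η*)⟩ = 0 for all ℓ = 1, …, r and c_ℓ ⟨A_ℓ(e_j), R(x*, η*)⟩ = 0 for all ℓ = 1, …, r and all standard basis vectors e_j of ℝ^{q_ℓ}, then ‖R(x*, η*)‖ ≤ ‖R(x, η)‖ for all (x, η). In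 particular, taking ψ_i = T_i(p_i(t))φ_i, A_i = the derivative [T_i'(p_i(t))φ_i], c_i = z̃_i(t), and b = F(Σ_i z̃_i(t) T_i(p_i(t))φ_i), any solution (z̃, p) of the coupled reduced order model yields, at each time t, a pair (ż̃(t), ṗ(t)) that minimizes the norm of the residual of the evolution equation among all candidate velocities. -/
open scoped RealInnerProductSpace

/-- In a real Hilbert space `X`, consider the affine residual
`R(x, η) = ∑ᵢ xᵢ ψᵢ + ∑ᵢ cᵢ Aᵢ(ηᵢ) − b`. If `(x*, η*)` satisfies the normal
(Galerkin) equations `⟪ψ_ℓ, R(x*, η*)⟫ = 0` and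
`c_ℓ ⟪A_ℓ(e_j), R(x*, η*)⟫ = 0` for all `ℓ` and all standard basis vectors
`e_j`, then `‖R(x*, η*)‖ ≤ ‖R(x, η)‖` for all `(x, η)`; i.e. the coupled
reduced order model is continuously optimal. -/
theorem coupled_rom_continuous_optimality
    {X : Type*} [NormedAddCommGroup X] [InnerProductSpace ℝ X]
    (r : ℕ) (q : Fin r → ℕ) (ψ : Fin r → X)
    (A : (i : Fin r) → ((Fin (q i) → ℝ) →L[ℝ] X))
    (c : Fin r → ℝ) (b : X)
    (R : (Fin r → ℝ) → ((i : Fin r) → Fin (q i) → ℝ) → X)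
    (hR : ∀ x η, R x η = ∑ i, x i • ψ i + ∑ i, c i • A i (η i) - b)
    (xs : Fin r → ℝ) (ηs : (i : Fin r) → Fin (q i) → ℝ)
    (h1 : ∀ ℓ : Fin r, ⟪ψ ℓ, R xs ηs⟫ = 0)
    (h2 : ∀ (ℓ : Fin r) (j : Fin (q ℓ)),
      c ℓ * ⟪A ℓ (Pi.single j 1), R xs ηs⟫ = 0) :
    ∀ (x : Fin r → ℝ) (η : (i : Fin r) → Fin (q i) → ℝ),
      ‖R xs ηs‖ ≤ ‖R x η‖ := by
  intro x η
  set Rs := R xs ηs with hRs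
  -- A key fact: for any v, c ℓ * ⟪A ℓ v, Rs⟫ = 0
  have key : ∀ (ℓ : Fin r) (v : Fin (q ℓ) → ℝ), c ℓ * ⟪A ℓ v, Rs⟫ = 0 := by
    intro ℓ v
    have hv : v = ∑ j, v j • (Pi.single j 1 : Fin (q ℓ) → ℝ) := by
      ext k
      simp [Finset.sum_apply, Pi.single_apply, Finset.sum_ite_eq']
    rw [hv, map_sum, sum_inner, Finset.mul_sum]
    refine Finset.sum_eq_zero fun j _ => ?_
    rw [map_smul, inner_smul_left]
    have := h2 ℓ j
    simp only [RCLike.star_def, starRingEnd_apply, star_trivial]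
    linear_combination v j * this
  -- the difference d := R x η - Rs is orthogonal to Rs
  have hdiff : ⟪R x η - Rs, Rs⟫ = 0 := by
    have : R x η - Rs = ∑ i, (x i - xs i) • ψ i + ∑ i, c i • A i (η i - ηs i) := by
      rw [hR x η, hRs, hR xs ηs]
      simp only [map_sub, smul_sub, sub_smul, Finset.sum_sub_distrib]
      abel
    rw [this, inner_add_left, sum_inner, sum_inner]
    have t1 : ∀ i ∈ Finset.univ, ⟪(x i - xs i) • ψ i, Rs⟫ = 0 := by
      intro i _
      rw [inner_smul_left]
      simp [h1 i]
    have t2 : ∀ i ∈ Finset.univ, ⟪c i • A i (η i - ηs i), Rs⟫ = 0 := by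
      intro i _
      rw [inner_smul_left]
      simpa using key i (η i - ηs i)
    rw [Finset.sum_congr rfl t1, Finset.sum_congr rfl t2]
    simp
  -- Pythagoras
  have : ‖R x η‖ ^ 2 = ‖R x η - Rs‖ ^ 2 + ‖Rs‖ ^ 2 := by
    have := norm_add_sq_real (R x η - Rs) Rs
    simp only [sub_add_cancel] at this
    rw [this, hdiff]
    ring
  nlinarith [norm_nonneg (R x η - Rs), norm_nonneg (R x η), norm_nonneg Rs, sq_nonneg ‖R x η - Rs‖]
end

section
/- Let X be a real Hilbert space and for i = 1, …, r let g_i : ℝ^{q_i} → X be continuously differentiable maps with locally Lipschitz derivatives (g_i(p) plays the role of T_i(p)φ_i), and let Φ : X → X be locally Lipschitz. Set q := q₁ + … + q_r. For p = (p₁, …, p_r) ∈ ℝ^q define the symmetric block matrix M(p) ∈ ℝ^{(r+q)×(r+q)} with blocks [⟨g_i(p_i), g_j(p_j)⟩]_{i,j}, [⟨g_i(p_i), Dg_j(p_j)e_k⟩]_{i;j,k}, and [⟨Dg_i(p_i)e_k, Dg_j(p_j)e_l⟩]_{i,k;j,l}, and for z̃ ∈ ℝ^r set D(z̃) := diag(z̃₁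 I_{q₁}, …, z̃_r I_{q_r}). Define F_z(p, z̃) ∈ ℝ^r and F_p(p, z̃) ∈ ℝ^q by F_z(p, z̃)_i := ⟨g_i(p_i), Φ(Σ_j z̃_j g_j(p_j))⟩ and F_p(p, z̃)_{i,k} := ⟨Dg_i(p_i)e_k, Φ(Σ_j z̃_j g_j(p_j))⟩. Let initial values (z̃₀, p₀) be given with M(p₀) invertible and z̃₀,i ≠ 0 for all i. Then there exists T̃ > 0 and a unique continuously differentiable solution (z̃, p) : [0, T̃) → ℝ^r × ℝ^q of the coupled system blockdiag(I_r, D(z̃(t))ᵀ) · M(p(t)) · blockdiag(I_r, D(z̃(t))) · (ż̃(t), ṗ(t)) = (F_z(p(t), z̃(t)), D(z̃(t))ᵀ F_p(p(t), z̃(t))) with z̃(0) = z̃₀ and p(0) = p₀. -/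
open scoped RealInnerProductSpace

open Set Metric Filter Topology
open scoped ENNReal NNReal

section LipAtDev

variable {α : Type*} {β : Type*} {γ : Type*} [PseudoEMetricSpace α] [PseudoEMetricSpace β]
  [PseudoEMetricSpace γ]

/-- `f` is Lipschitz on some neighbourhood of `x`. -/
def LipAt (f : α → β) (x : α) : Prop := ∃ K : NNReal, ∃ s ∈ 𝓝 x, LipschitzOnWith K f s

theorem lipAt_const (b : β) (x : α) : LipAt (fun _ => b) x :=
  ⟨0, Set.univ, Filter.univ_mem, (LipschitzWith.const b).lipschitzOnWith⟩

theorem LipschitzWith.lipAt {K : NNReal} {f : α → β} (h : LipschitzWith K f) (x : α) :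
    LipAt f x := ⟨K, Set.univ, Filter.univ_mem, h.lipschitzOnWith⟩

theorem LocallyLipschitz.lipAt {f : α → β} (h : LocallyLipschitz f) (x : α) : LipAt f x := h x

theorem LipAt.continuousAt {f : α → β} {x : α} (h : LipAt f x) : ContinuousAt f x := by
  obtain ⟨K, s, hs, hl⟩ := h
  exact hl.continuousOn.continuousAt hs

theorem LipAt.comp {g : β → γ} {f : α → β} {x : α} (hg : LipAt g (f x)) (hf : LipAt f x) :
    LipAt (fun y => g (f y)) x := by
  obtain ⟨Kg, t, ht, hlg⟩ := hg
  obtain ⟨Kf, s, hs, hlf⟩ := hf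
  have hc : ContinuousAt f x := LipAt.continuousAt ⟨Kf, s, hs, hlf⟩
  refine ⟨Kg * Kf, s ∩ f ⁻¹' t, Filter.inter_mem hs (hc.preimage_mem_nhds ht), ?_⟩
  exact hlg.comp (hlf.mono Set.inter_subset_left) fun y hy => hy.2

theorem LipAt.prodMk {f : α → β} {g : α → γ} {x : α} (hf : LipAt f x) (hg : LipAt g x) :
    LipAt (fun y => (f y, g y)) x := by
  obtain ⟨Kf, s, hs, hlf⟩ := hf
  obtain ⟨Kg, t, ht, hlg⟩ := hg
  exact ⟨Kf ⊔ Kg, s ∩ t, Filter.inter_mem hs ht,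
    (hlf.mono Set.inter_subset_left).prodMk (hlg.mono Set.inter_subset_right)⟩

theorem lipAt_pi {ι : Type*} [Fintype ι] {π : ι → Type*} [∀ i, PseudoEMetricSpace (π i)]
    {f : (i : ι) → α → π i} {x : α} (h : ∀ i, LipAt (f i) x) :
    LipAt (fun y i => f i y) x := by
  choose K s hs hl using h
  refine ⟨Finset.univ.sup K, ⋂ i, s i, Filter.iInter_mem.mpr hs, fun y hy z hz => ?_⟩
  rw [edist_pi_le_iff]
  intro i
  calc edist (f i y) (f i z) ≤ (K i : ℝ≥0∞) * edist y z :=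
        hl i (Set.mem_iInter.mp hy i) (Set.mem_iInter.mp hz i)
    _ ≤ ((Finset.univ.sup K : ℝ≥0) : ℝ≥0∞) * edist y z := by
        gcongr
        exact_mod_cast Finset.le_sup (Finset.mem_univ i)

variable {F G : Type*} [NormedAddCommGroup F] [NormedSpace ℝ F]
  [NormedAddCommGroup G] [NormedSpace ℝ G]

theorem ContDiffAt.lipAt {f : F → G} {x : F} (h : ContDiffAt ℝ 1 f x) : LipAt f x := by
  obtain ⟨K, t, ht, hl⟩ := h.exists_lipschitzOnWith
  exact ⟨K, t, ht, hl⟩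

theorem LipAt.add {f g : α → F} {x : α} (hf : LipAt f x) (hg : LipAt g x) :
    LipAt (fun y => f y + g y) x := by
  have houter : LipAt (fun p : F × F => p.1 + p.2) (f x, g x) :=
    ((ContinuousLinearMap.fst ℝ F F) + (ContinuousLinearMap.snd ℝ F F)).lipschitz.lipAt _
  exact LipAt.comp (f := fun y => (f y, g y)) houter (hf.prodMk hg)

theorem LipAt.mul {f g : α → ℝ} {x : α} (hf : LipAt f x) (hg : LipAt g x) :
    LipAt (fun y => f y * g y) x := by
  have houter : LipAt (fun p : ℝ × ℝ => p.1 * p.2) (f x, g x) :=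
    ((contDiff_fst.mul contDiff_snd).contDiffAt (n := 1)).lipAt
  exact LipAt.comp (f := fun y => (f y, g y)) houter (hf.prodMk hg)

theorem LipAt.smul {f : α → ℝ} {g : α → F} {x : α} (hf : LipAt f x) (hg : LipAt g x) :
    LipAt (fun y => f y • g y) x := by
  have houter : LipAt (fun p : ℝ × F => p.1 • p.2) (f x, g x) :=
    ((contDiff_fst.smul contDiff_snd).contDiffAt (n := 1)).lipAt
  exact LipAt.comp (f := fun y => (f y, g y)) houter (hf.prodMk hg)

theorem LipAt.inner {X : Type*} [NormedAddCommGroup X] [InnerProductSpace ℝ X]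
    {f g : α → X} {x : α} (hf : LipAt f x) (hg : LipAt g x) :
    LipAt (fun y => (⟪f y, g y⟫ : ℝ)) x := by
  have houter : LipAt (fun p : X × X => (⟪p.1, p.2⟫ : ℝ)) (f x, g x) :=
    ((ContDiff.inner ℝ contDiff_fst contDiff_snd (n := 1)).contDiffAt).lipAt
  exact LipAt.comp (f := fun y => (f y, g y)) houter (hf.prodMk hg)

theorem LipAt.inv {f : α → ℝ} {x : α} (hf : LipAt f x) (h0 : f x ≠ 0) :
    LipAt (fun y => (f y)⁻¹) x := by
  have houter : LipAt (fun t : ℝ => t⁻¹) (f x) := ((contDiffAt_inv ℝ h0 (n := 1))).lipAt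
  exact houter.comp hf

theorem LipAt.finsetSum {ι : Type*} {s : Finset ι} {f : ι → α → F} {x : α}
    (h : ∀ i ∈ s, LipAt (f i) x) : LipAt (fun y => ∑ i ∈ s, f i y) x := by
  classical
  induction s using Finset.induction_on with
  | empty => simpa using lipAt_const (0 : F) x
  | @insert a s hni ih =>
    simp only [Finset.sum_insert hni]
    exact (h a (Finset.mem_insert_self _ _)).add (ih fun i hi => h i (Finset.mem_insert_of_mem hi))

theorem LipAt.finsetProd {ι : Type*} {s : Finset ι} {f : ι → α → ℝ} {x : α}
    (h : ∀ i ∈ s, LipAt (f i) x) : LipAt (fun y => ∏ i ∈ s, f i y) x := by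
  classical
  induction s using Finset.induction_on with
  | empty => simpa using lipAt_const (1 : ℝ) x
  | @insert a s hni ih =>
    simp only [Finset.prod_insert hni]
    exact (h a (Finset.mem_insert_self _ _)).mul (ih fun i hi => h i (Finset.mem_insert_of_mem hi))

theorem LipAt.matrixDet {n : Type*} [Fintype n] [DecidableEq n] {F : α → Matrix n n ℝ} {x : α}
    (h : ∀ a b, LipAt (fun y => F y a b) x) : LipAt (fun y => (F y).det) x := by
  have hrw : (fun y => (F y).det)
      = fun y => ∑ σ : Equiv.Perm n, ((Equiv.Perm.sign σ : ℤ) : ℝ) * ∏ i, F y (σ i) i := by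
    funext y
    rw [Matrix.det_apply']
  rw [hrw]
  exact LipAt.finsetSum fun σ _ =>
    (lipAt_const _ _).mul (LipAt.finsetProd fun i _ => h _ _)

end LipAtDev


section CoupledROM

variable {X : Type*} [NormedAddCommGroup X] [InnerProductSpace ℝ X]
variable {r : ℕ} {q : Fin r → ℕ}

/-- The combined index set `{1,…,r} ⊔ ⨆ᵢ {1,…,qᵢ}` for the block system
(coefficient indices followed by path indices). -/
abbrev RomIndex (r : ℕ) (q : Fin r → ℕ) : Type := (Fin r) ⊕ (Σ i : Fin r, Fin (q i))

/-- The symmetric block matrix `M(p)` with blocks `[⟪gᵢ(pᵢ), gⱼ(pⱼ)⟫]`,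
`[⟪gᵢ(pᵢ), Dgⱼ(pⱼ)e_k⟫]` and `[⟪Dgᵢ(pᵢ)e_k, Dgⱼ(pⱼ)e_l⟫]`. -/
noncomputable def romBlockMatrix
    (g : (i : Fin r) → (Fin (q i) → ℝ) → X)
    (Dg : (i : Fin r) → (Fin (q i) → ℝ) → ((Fin (q i) → ℝ) →L[ℝ] X))
    (p : (i : Fin r) → Fin (q i) → ℝ) :
    Matrix (RomIndex r q) (RomIndex r q) ℝ :=
  Matrix.of fun a b =>
    match a, b with
    | Sum.inl i, Sum.inl j => ⟪g i (p i), g j (p j)⟫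
    | Sum.inl i, Sum.inr s => ⟪g i (p i), Dg s.1 (p s.1) (Pi.single s.2 1)⟫
    | Sum.inr s, Sum.inl j => ⟪Dg s.1 (p s.1) (Pi.single s.2 1), g j (p j)⟫
    | Sum.inr s, Sum.inr u =>
        ⟪Dg s.1 (p s.1) (Pi.single s.2 1), Dg u.1 (p u.1) (Pi.single u.2 1)⟫

/-- The diagonal of `blockdiag(I_r, D(z̃))` with `D(z̃) = diag(z̃₁ I_{q₁}, …, z̃_r I_{q_r})`. -/
def romDiag (zt : Fin r → ℝ) : RomIndex r q → ℝ :=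
  Sum.elim (fun _ => 1) (fun s => zt s.1)

/-- The right-hand side `(F_z(p, z̃), D(z̃)ᵀ F_p(p, z̃))` of the coupled system. -/
noncomputable def romRhs
    (g : (i : Fin r) → (Fin (q i) → ℝ) → X)
    (Dg : (i : Fin r) → (Fin (q i) → ℝ) → ((Fin (q i) → ℝ) →L[ℝ] X))
    (Φ : X → X)
    (p : (i : Fin r) → Fin (q i) → ℝ) (zt : Fin r → ℝ) :
    RomIndex r q → ℝ :=
  Sum.elim
    (fun i => ⟪g i (p i), Φ (∑ j, zt j • g j (p j))⟫)
    (fun s => zt s.1 * ⟪Dg s.1 (p s.1) (Pi.single s.2 1), Φ (∑ j, zt j • g j (p j))⟫)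

/-- `(zt, P)` (with derivatives `ztd, Pd`) is a continuously differentiable
solution of the coupled reduced order model
`blockdiag(I, D(z̃)ᵀ) M(p) blockdiag(I, D(z̃)) (ż̃, ṗ) = (F_z, D(z̃)ᵀ F_p)`
on `[0, T̃)` with initial values `(z̃₀, p₀)`. -/
noncomputable def IsRomSolution
    (g : (i : Fin r) → (Fin (q i) → ℝ) → X)
    (Dg : (i : Fin r) → (Fin (q i) → ℝ) → ((Fin (q i) → ℝ) →L[ℝ] X))
    (Φ : X → X)
    (zt0 : Fin r → ℝ) (p0 : (i : Fin r) → Fin (q i) → ℝ)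
    (Ttil : ℝ)
    (zt : ℝ → Fin r → ℝ) (ztd : ℝ → Fin r → ℝ)
    (P : ℝ → (i : Fin r) → Fin (q i) → ℝ)
    (Pd : ℝ → (i : Fin r) → Fin (q i) → ℝ) : Prop :=
  zt 0 = zt0 ∧ P 0 = p0 ∧
  (∀ t ∈ Set.Ico 0 Ttil, HasDerivWithinAt zt (ztd t) (Set.Ico 0 Ttil) t) ∧
  (∀ t ∈ Set.Ico 0 Ttil, HasDerivWithinAt P (Pd t) (Set.Ico 0 Ttil) t) ∧
  ContinuousOn ztd (Set.Ico 0 Ttil) ∧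
  ContinuousOn Pd (Set.Ico 0 Ttil) ∧
  (∀ t ∈ Set.Ico 0 Ttil, ∀ a : RomIndex r q,
    romDiag (zt t) a *
      (∑ b : RomIndex r q, romBlockMatrix g Dg (P t) a b *
        (romDiag (zt t) b * Sum.elim (ztd t) (fun s => Pd t s.1 s.2) b))
      = romRhs g Dg Φ (P t) (zt t) a)


/-- The combined state space for the reduced order model. -/
abbrev RomState (r : ℕ) (q : Fin r → ℕ) : Type := (Fin r → ℝ) × ((i : Fin r) → Fin (q i) → ℝ)

/-- The full system matrix `blockdiag(I, D(z̃)ᵀ) M(p) blockdiag(I, D(z̃))`. -/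
noncomputable def romA
    (g : (i : Fin r) → (Fin (q i) → ℝ) → X)
    (Dg : (i : Fin r) → (Fin (q i) → ℝ) → ((Fin (q i) → ℝ) →L[ℝ] X))
    (y : RomState r q) : Matrix (RomIndex r q) (RomIndex r q) ℝ :=
  Matrix.of fun a b => romDiag (q := q) y.1 a * romBlockMatrix g Dg y.2 a b * romDiag (q := q) y.1 b

/-- The full right hand side as a function of the state. -/
noncomputable def romF
    (g : (i : Fin r) → (Fin (q i) → ℝ) → X)
    (Dg : (i : Fin r) → (Fin (q i) → ℝ) → ((Fin (q i) → ℝ) →L[ℝ] X))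
    (Φ : X → X) (y : RomState r q) : RomIndex r q → ℝ :=
  romRhs g Dg Φ y.2 y.1

/-- The solved-for derivative vector. -/
noncomputable def romV
    (g : (i : Fin r) → (Fin (q i) → ℝ) → X)
    (Dg : (i : Fin r) → (Fin (q i) → ℝ) → ((Fin (q i) → ℝ) →L[ℝ] X))
    (Φ : X → X) (y : RomState r q) : RomIndex r q → ℝ :=
  (romA g Dg y)⁻¹.mulVec (romF g Dg Φ y)

/-- The vector field of the coupled reduced order model. -/
noncomputable def romVF
    (g : (i : Fin r) → (Fin (q i) → ℝ) → X)
    (Dg : (i : Fin r) → (Fin (q i) → ℝ) → ((Fin (q i) → ℝ) →L[ℝ] X))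
    (Φ : X → X) (y : RomState r q) : RomState r q :=
  (fun i => romV g Dg Φ y (Sum.inl i), fun i k => romV g Dg Φ y (Sum.inr ⟨i, k⟩))

variable (g : (i : Fin r) → (Fin (q i) → ℝ) → X)
  (Dg : (i : Fin r) → (Fin (q i) → ℝ) → ((Fin (q i) → ℝ) →L[ℝ] X))
  (Φ : X → X)

theorem romA_mulVec (y : RomState r q) (u : RomIndex r q → ℝ) (a : RomIndex r q) :
    (romA g Dg y).mulVec u a
      = romDiag (q := q) y.1 a * ∑ b, romBlockMatrix g Dg y.2 a b * (romDiag (q := q) y.1 b * u b) := by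
  simp only [Matrix.mulVec, dotProduct, romA, Matrix.of_apply]
  rw [Finset.mul_sum]
  exact Finset.sum_congr rfl fun b _ => by ring

theorem romA_eq_diag (y : RomState r q) :
    romA g Dg y = Matrix.diagonal (romDiag (q := q) y.1) * romBlockMatrix g Dg y.2
      * Matrix.diagonal (romDiag (q := q) y.1) := by
  ext a b
  simp only [romA, Matrix.of_apply, Matrix.mul_diagonal, Matrix.diagonal_mul]

theorem romV_mulVec {y : RomState r q} (hdet : IsUnit (romA g Dg y).det) :
    (romA g Dg y).mulVec (romV g Dg Φ y) = romF g Dg Φ y := by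
  rw [romV, Matrix.mulVec_mulVec, Matrix.mul_nonsing_inv _ hdet, Matrix.one_mulVec]

theorem romV_eq_of {y : RomState r q} {u : RomIndex r q → ℝ}
    (hdet : IsUnit (romA g Dg y).det) (h : (romA g Dg y).mulVec u = romF g Dg Φ y) :
    u = romV g Dg Φ y := by
  have h2 := congrArg (fun w => (romA g Dg y)⁻¹.mulVec w) h
  simp only [Matrix.mulVec_mulVec, Matrix.nonsing_inv_mul _ hdet, Matrix.one_mulVec] at h2
  rw [h2, romV]

theorem romV_apply (y : RomState r q) (a : RomIndex r q) :
    romV g Dg Φ y a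
      = ((romA g Dg y).det)⁻¹ * ∑ b, (romA g Dg y).adjugate a b * romF g Dg Φ y b := by
  rw [romV, Matrix.inv_def, Ring.inverse_eq_inv']
  simp only [Matrix.mulVec, dotProduct, Matrix.smul_apply, smul_eq_mul]
  rw [Finset.mul_sum]
  exact Finset.sum_congr rfl fun b _ => by ring

theorem rom_entries_lipAt
    (hg : ∀ (i : Fin r) (η : Fin (q i) → ℝ), HasFDerivAt (g i) (Dg i η) η)
    (hDg : ∀ i : Fin r, LocallyLipschitz (Dg i))
    (hΦ : LocallyLipschitz Φ) (y0 : RomState r q) :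
    (∀ a b, LipAt (fun y => romA g Dg y a b) y0)
      ∧ (∀ b, LipAt (fun y => romF g Dg Φ y b) y0) := by
  have hgC : ∀ i, ContDiff ℝ 1 (g i) := by
    intro i
    refine contDiff_one_iff_fderiv.mpr ⟨fun η => (hg i η).differentiableAt, ?_⟩
    have hfd : fderiv ℝ (g i) = Dg i := funext fun η => (hg i η).fderiv
    rw [hfd]
    exact (hDg i).continuous
  have hz : ∀ i, LipAt (fun y : RomState r q => y.1 i) y0 := fun i =>
    (((ContinuousLinearMap.proj i).comp
      (ContinuousLinearMap.fst ℝ (Fin r → ℝ) ((i : Fin r) → Fin (q i) → ℝ))).lipschitz).lipAt y0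
  have hp : ∀ i, LipAt (fun y : RomState r q => y.2 i) y0 := fun i =>
    (((ContinuousLinearMap.proj i).comp
      (ContinuousLinearMap.snd ℝ (Fin r → ℝ) ((i : Fin r) → Fin (q i) → ℝ))).lipschitz).lipAt y0
  have hG : ∀ i, LipAt (fun y : RomState r q => g i (y.2 i)) y0 := fun i =>
    ((hgC i).contDiffAt.lipAt).comp (hp i)
  have happly : ∀ (i : Fin r) (c : Fin (q i) → ℝ),
      LipschitzWith ‖c‖₊ (fun L : (Fin (q i) → ℝ) →L[ℝ] X => L c) := by
    intro i c
    refine LipschitzWith.of_dist_le_mul fun L L' => ?_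
    rw [dist_eq_norm, dist_eq_norm, ← ContinuousLinearMap.sub_apply, coe_nnnorm]
    calc ‖(L - L') c‖ ≤ ‖L - L'‖ * ‖c‖ := (L - L').le_opNorm c
      _ = ‖c‖ * ‖L - L'‖ := mul_comm _ _
  have hDG : ∀ s : Σ i : Fin r, Fin (q i),
      LipAt (fun y : RomState r q => Dg s.1 (y.2 s.1) (Pi.single s.2 1)) y0 := fun s =>
    ((happly s.1 (Pi.single s.2 1)).lipAt _).comp (((hDg s.1).lipAt _).comp (hp s.1))
  have hM : ∀ a b, LipAt (fun y : RomState r q => romBlockMatrix g Dg y.2 a b) y0 := by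
    rintro (i | s) (j | u)
    · exact LipAt.inner (hG i) (hG j)
    · exact LipAt.inner (hG i) (hDG u)
    · exact LipAt.inner (hDG s) (hG j)
    · exact LipAt.inner (hDG s) (hDG u)
  have hd : ∀ a, LipAt (fun y : RomState r q => romDiag (q := q) y.1 a) y0 := by
    rintro (i | s)
    · exact lipAt_const 1 y0
    · exact hz s.1
  have hA : ∀ a b, LipAt (fun y => romA g Dg y a b) y0 := fun a b =>
    ((hd a).mul (hM a b)).mul (hd b)
  have hsum : LipAt (fun y : RomState r q => ∑ j, y.1 j • g j (y.2 j)) y0 :=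
    LipAt.finsetSum fun j _ => (hz j).smul (hG j)
  have hΦM : LipAt (fun y : RomState r q => Φ (∑ j, y.1 j • g j (y.2 j))) y0 :=
    (hΦ.lipAt _).comp hsum
  refine ⟨hA, ?_⟩
  rintro (i | s)
  · exact LipAt.inner (hG i) hΦM
  · exact (hz s.1).mul (LipAt.inner (hDG s) hΦM)

theorem romVF_lipAt {y0 : RomState r q}
    (hA : ∀ a b, LipAt (fun y => romA g Dg y a b) y0)
    (hF : ∀ b, LipAt (fun y => romF g Dg Φ y b) y0)
    (hdet : (romA g Dg y0).det ≠ 0) :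
    LipAt (romVF g Dg Φ) y0 := by
  have hdetL : LipAt (fun y => (romA g Dg y).det) y0 := LipAt.matrixDet hA
  have hadj : ∀ a b, LipAt (fun y => (romA g Dg y).adjugate a b) y0 := by
    intro a b
    have hrw : (fun y => (romA g Dg y).adjugate a b)
        = fun y => ((romA g Dg y).updateRow b (Pi.single a 1)).det := by
      funext y
      rw [Matrix.adjugate_apply]
    rw [hrw]
    refine LipAt.matrixDet fun c d => ?_
    have hrw2 : (fun y => (romA g Dg y).updateRow b (Pi.single a 1) c d)
        = fun y => if c = b then (Pi.single a 1 : RomIndex r q → ℝ) d else romA g Dg y c d := by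
      funext y
      rw [Matrix.updateRow_apply]
    rw [hrw2]
    rcases eq_or_ne c b with h | h
    · simp only [if_pos h]
      exact lipAt_const _ _
    · simp only [if_neg h]
      exact hA c d
  have hV : ∀ a, LipAt (fun y => romV g Dg Φ y a) y0 := by
    intro a
    have hform : (fun y => romV g Dg Φ y a)
        = fun y => ((romA g Dg y).det)⁻¹
            * ∑ b, (romA g Dg y).adjugate a b * romF g Dg Φ y b :=
      funext fun y => romV_apply g Dg Φ y a
    rw [hform]
    exact (hdetL.inv hdet).mul (LipAt.finsetSum fun b _ => (hadj a b).mul (hF b))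
  exact LipAt.prodMk (lipAt_pi fun i => hV (Sum.inl i))
    (lipAt_pi fun i => lipAt_pi fun k => hV (Sum.inr ⟨i, k⟩))

/-- If the `gᵢ` are continuously differentiable with locally
Lipschitz derivatives, `Φ` is locally Lipschitz, the block mass matrix `M(p₀)`
is invertible and all initial coefficients `z̃₀ᵢ` are nonzero, then the coupled
reduced order model (Galerkin equations plus residual-minimizing phase
condition) has a unique continuously differentiable local solution. -/
theorem coupled_rom_local_existence_uniqueness
    (g : (i : Fin r) → (Fin (q i) → ℝ) → X)
    (Dg : (i : Fin r) → (Fin (q i) → ℝ) → ((Fin (q i) → ℝ) →L[ℝ] X))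
    (hg : ∀ (i : Fin r) (η : Fin (q i) → ℝ), HasFDerivAt (g i) (Dg i η) η)
    (hDg : ∀ i : Fin r, LocallyLipschitz (Dg i))
    (Φ : X → X) (hΦ : LocallyLipschitz Φ)
    (zt0 : Fin r → ℝ) (p0 : (i : Fin r) → Fin (q i) → ℝ)
    (hM : IsUnit (romBlockMatrix g Dg p0))
    (hzt0 : ∀ i, zt0 i ≠ 0) :
    ∃ Ttil > (0 : ℝ), ∃ zt ztd P Pd,
      IsRomSolution g Dg Φ zt0 p0 Ttil zt ztd P Pd ∧
      ∀ zt' ztd' P' Pd',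
        IsRomSolution g Dg Φ zt0 p0 Ttil zt' ztd' P' Pd' →
        ∀ t ∈ Set.Ico 0 Ttil, zt' t = zt t ∧ P' t = P t := by
  classical
  -- initial state and nondegeneracy
  set y0 : RomState r q := (zt0, p0) with hy0def
  have hdnz : ∀ a : RomIndex r q, romDiag (q := q) zt0 a ≠ 0 := by
    rintro (i | s)
    · exact one_ne_zero
    · exact hzt0 s.1
  have hMdet : (romBlockMatrix g Dg p0).det ≠ 0 :=
    isUnit_iff_ne_zero.mp ((Matrix.isUnit_iff_isUnit_det _).mp hM)
  have hdet0 : (romA g Dg y0).det ≠ 0 := by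
    rw [romA_eq_diag, Matrix.det_mul, Matrix.det_mul, Matrix.det_diagonal]
    exact mul_ne_zero (mul_ne_zero (Finset.prod_ne_zero_iff.mpr fun a _ => hdnz a) hMdet)
      (Finset.prod_ne_zero_iff.mpr fun a _ => hdnz a)
  -- Lipschitz neighbourhood of the vector field
  obtain ⟨hAlip, hFlip⟩ := rom_entries_lipAt g Dg Φ hg hDg hΦ y0
  obtain ⟨K, s, hs, hlips⟩ := romVF_lipAt g Dg Φ hAlip hFlip hdet0
  have hdetC : ContinuousAt (fun y => (romA g Dg y).det) y0 :=
    (LipAt.matrixDet hAlip).continuousAt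
  have hne : {y : RomState r q | (romA g Dg y).det ≠ 0} ∈ 𝓝 y0 := hdetC.eventually_ne hdet0
  obtain ⟨R, hR0, hRsub⟩ := Metric.nhds_basis_closedBall.mem_iff.mp (Filter.inter_mem hs hne)
  have hlipB : LipschitzOnWith K (romVF g Dg Φ) (Metric.closedBall y0 R) :=
    hlips.mono fun y hy => (hRsub hy).1
  have hdetB : ∀ y ∈ Metric.closedBall y0 R, (romA g Dg y).det ≠ 0 := fun y hy => (hRsub hy).2
  have hhalf : Metric.closedBall y0 (R / 2) ⊆ Metric.closedBall y0 R :=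
    Metric.closedBall_subset_closedBall (by linarith)
  -- bound on the vector field
  set C : ℝ := ‖romVF g Dg Φ y0‖ + K * R + 1 with hCdef
  have hC0 : 0 < C := by positivity
  have hCb : ∀ y ∈ Metric.closedBall y0 R, ‖romVF g Dg Φ y‖ ≤ C := by
    intro y hy
    have h1 : dist (romVF g Dg Φ y) (romVF g Dg Φ y0) ≤ K * dist y y0 :=
      hlipB.dist_le_mul y hy y0 (Metric.mem_closedBall_self hR0.le)
    have h2 : dist y y0 ≤ R := Metric.mem_closedBall.mp hy
    have h3 : ‖romVF g Dg Φ y‖ - ‖romVF g Dg Φ y0‖ ≤ dist (romVF g Dg Φ y) (romVF g Dg Φ y0) := by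
      rw [dist_eq_norm]
      exact norm_sub_norm_le _ _
    have hK0 : (0 : ℝ) ≤ K := K.coe_nonneg
    nlinarith
  set T : ℝ := (R / 2) / C with hTdef
  have hT0 : 0 < T := by positivity
  -- Picard-Lindelöf existence
  have hPL : ∃ sol : ℝ → RomState r q, sol 0 = y0
      ∧ (∀ t ∈ Icc (0 : ℝ) T, HasDerivWithinAt sol (romVF g Dg Φ (sol t)) (Icc 0 T) t)
      ∧ (∀ t ∈ Icc (0 : ℝ) T, sol t ∈ Metric.closedBall y0 (R / 2)) := by
    have h0T : (0 : ℝ) ∈ Icc (0 : ℝ) T := left_mem_Icc.mpr hT0.le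
    obtain ⟨CN, hCN⟩ : ∃ CN : ℝ≥0, (CN : ℝ) = C := ⟨⟨C, hC0.le⟩, rfl⟩
    obtain ⟨RN, hRN⟩ : ∃ RN : ℝ≥0, (RN : ℝ) = R / 2 := ⟨⟨R / 2, by positivity⟩, rfl⟩
    have hf : IsPicardLindelof (E := RomState r q) (fun (_ : ℝ) y => romVF g Dg Φ y)
        (⟨0, h0T⟩ : Icc (0 : ℝ) T) y0 RN 0 CN K :=
      { lipschitzOnWith := fun t _ => by rw [hRN]; exact hlipB.mono hhalf
        continuousOn := fun x _ => continuousOn_const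
        norm_le := fun t _ x hx => by rw [hRN] at hx; rw [hCN]; exact hCb x (hhalf hx)
        mul_max_le := by
          have hmax : max (T - 0) ((0 : ℝ) - 0) = T := by
            rw [sub_zero, sub_zero]
            exact max_eq_left hT0.le
          show (CN : ℝ) * max (T - 0) ((0 : ℝ) - 0) ≤ (RN : ℝ) - 0
          rw [hRN, hCN, hmax, sub_zero, hTdef, mul_comm, div_mul_cancel₀ _ hC0.ne'] }
    have hx : y0 ∈ Metric.closedBall y0 ((0 : ℝ≥0) : ℝ) := Metric.mem_closedBall_self (by simp)
    obtain ⟨α, hα⟩ := ODE.FunSpace.exists_isFixedPt_next hf hx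
    refine ⟨α.compProj, ?_, ?_, ?_⟩
    · show α.compProj ((⟨0, h0T⟩ : Icc (0 : ℝ) T) : ℝ) = y0
      rw [ODE.FunSpace.compProj_val, ← hα, ODE.FunSpace.next_apply₀]
    · intro t ht
      refine (ODE.hasDerivWithinAt_picard_Icc h0T hf.continuousOn_uncurry
        α.continuous_compProj.continuousOn
        (fun _ ht' => α.compProj_mem_closedBall hf.mul_max_le) y0 ht).congr_of_mem ?_ ht
      intro t' ht'
      nth_rw 1 [← hα]
      rw [ODE.FunSpace.compProj_of_mem ht', ODE.FunSpace.next_apply]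
    · intro t ht
      have hmem := α.compProj_mem_closedBall hf.mul_max_le (t := t)
      rwa [hRN] at hmem
  obtain ⟨sol, hsol0, hsolderiv, hsolmem⟩ := hPL
  have hsolc : ContinuousOn sol (Icc 0 T) := fun u hu => (hsolderiv u hu).continuousWithinAt
  have hsolB : ∀ t ∈ Icc (0 : ℝ) T, sol t ∈ Metric.closedBall y0 R := fun t ht =>
    hhalf (hsolmem t ht)
  -- derivative of a componentwise solution equals the vector field where det ≠ 0
  have hkeygen : ∀ (zt' ztd' : ℝ → Fin r → ℝ) (P' Pd' : ℝ → (i : Fin r) → Fin (q i) → ℝ)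
      (u : ℝ), (∀ a : RomIndex r q,
        romDiag (zt' u) a *
          (∑ b : RomIndex r q, romBlockMatrix g Dg (P' u) a b *
            (romDiag (zt' u) b * Sum.elim (ztd' u) (fun s => Pd' u s.1 s.2) b))
          = romRhs g Dg Φ (P' u) (zt' u) a) →
      (zt' u, P' u) ∈ Metric.closedBall y0 R →
      (ztd' u, Pd' u) = romVF g Dg Φ (zt' u, P' u) := by
    intro zt' ztd' P' Pd' u hequ hmem
    have hdet : IsUnit (romA g Dg (zt' u, P' u)).det :=
      isUnit_iff_ne_zero.mpr (hdetB _ hmem)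
    have hmv : (romA g Dg (zt' u, P' u)).mulVec (Sum.elim (ztd' u) fun s => Pd' u s.1 s.2)
        = romF g Dg Φ (zt' u, P' u) := by
      funext a
      rw [romA_mulVec]
      exact hequ a
    have hu := romV_eq_of g Dg Φ hdet hmv
    refine Prod.ext ?_ ?_
    · funext i
      exact congrFun hu (Sum.inl i)
    · funext i k
      exact congrFun hu (Sum.inr ⟨i, k⟩)
  refine ⟨T, hT0, fun t => (sol t).1, fun t => (romVF g Dg Φ (sol t)).1,
    fun t => (sol t).2, fun t => (romVF g Dg Φ (sol t)).2, ?_, ?_⟩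
  · refine ⟨?_, ?_, ?_, ?_, ?_, ?_, ?_⟩
    · show (sol 0).1 = zt0
      rw [hsol0]
    · show (sol 0).2 = p0
      rw [hsol0]
    · intro t ht
      have h := (hsolderiv t (Ico_subset_Icc_self ht)).mono Ico_subset_Icc_self
      exact ((ContinuousLinearMap.fst ℝ (Fin r → ℝ)
        ((i : Fin r) → Fin (q i) → ℝ)).hasFDerivAt).comp_hasDerivWithinAt t h
    · intro t ht
      have h := (hsolderiv t (Ico_subset_Icc_self ht)).mono Ico_subset_Icc_self
      exact ((ContinuousLinearMap.snd ℝ (Fin r → ℝ)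
        ((i : Fin r) → Fin (q i) → ℝ)).hasFDerivAt).comp_hasDerivWithinAt t h
    · have hvfc : ContinuousOn (fun t => romVF g Dg Φ (sol t)) (Icc 0 T) :=
        hlipB.continuousOn.comp hsolc hsolB
      exact ((continuous_fst.comp_continuousOn hvfc).mono Ico_subset_Icc_self)
    · have hvfc : ContinuousOn (fun t => romVF g Dg Φ (sol t)) (Icc 0 T) :=
        hlipB.continuousOn.comp hsolc hsolB
      exact ((continuous_snd.comp_continuousOn hvfc).mono Ico_subset_Icc_self)
    · intro t ht a
      have hyB : sol t ∈ Metric.closedBall y0 R := hsolB t (Ico_subset_Icc_self ht)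
      have hdet : IsUnit (romA g Dg (sol t)).det := isUnit_iff_ne_zero.mpr (hdetB _ hyB)
      have helim : (Sum.elim ((romVF g Dg Φ (sol t)).1)
          (fun s => (romVF g Dg Φ (sol t)).2 s.1 s.2)) = romV g Dg Φ (sol t) := by
        funext b
        rcases b with i | ⟨i, k⟩ <;> rfl
      have key := congrFun (romV_mulVec g Dg Φ hdet) a
      rw [romA_mulVec] at key
      rw [helim]
      exact key
  · rintro zt' ztd' P' Pd' ⟨hz0, hP0, hzd, hPd, _, _, heq⟩ t htI
    have hy'0 : ((zt' 0, P' 0) : RomState r q) = y0 := by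
      rw [hz0, hP0]
    have hy'd : ∀ u ∈ Ico (0 : ℝ) T,
        HasDerivWithinAt (fun v => ((zt' v, P' v) : RomState r q)) (ztd' u, Pd' u) (Ico 0 T) u :=
      fun u hu => (hzd u hu).prodMk (hPd u hu)
    have hy'c : ∀ u ∈ Ico (0 : ℝ) T,
        ContinuousWithinAt (fun v => ((zt' v, P' v) : RomState r q)) (Ico 0 T) u :=
      fun u hu => (hy'd u hu).continuousWithinAt
    -- the agreement set
    set S : Set ℝ := {u | u ∈ Icc 0 t ∧ ∀ v ∈ Icc (0 : ℝ) u,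
      ((zt' v, P' v) : RomState r q) = sol v} with hSdef
    have h0S : (0 : ℝ) ∈ S := by
      refine ⟨⟨le_rfl, htI.1⟩, fun v hv => ?_⟩
      have hv0 : v = 0 := le_antisymm hv.2 hv.1
      rw [hv0, hy'0, hsol0]
    have hbdd : BddAbove S := ⟨t, fun u hu => hu.1.2⟩
    set τ : ℝ := sSup S with hτdef
    have hτ0 : 0 ≤ τ := le_csSup hbdd h0S
    have hτt : τ ≤ t := csSup_le ⟨0, h0S⟩ fun u hu => hu.1.2
    have hτT : τ < T := lt_of_le_of_lt hτt htI.2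
    have hstep1 : ∀ v, 0 ≤ v → v < τ → ((zt' v, P' v) : RomState r q) = sol v := by
      intro v hv0 hvτ
      obtain ⟨u, huS, hvu⟩ := exists_lt_of_lt_csSup ⟨0, h0S⟩ hvτ
      exact huS.2 v ⟨hv0, hvu.le⟩
    have hτIco : τ ∈ Ico (0 : ℝ) T := ⟨hτ0, hτT⟩
    have hstep2 : ((zt' τ, P' τ) : RomState r q) = sol τ := by
      rcases eq_or_lt_of_le hτ0 with h0 | h0
      · rw [← h0, hy'0, hsol0]
      · have hnb : (𝓝[Ioo (0 : ℝ) τ] τ).NeBot := by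
          rw [← mem_closure_iff_nhdsWithin_neBot, closure_Ioo h0.ne]
          exact right_mem_Icc.mpr h0.le
        have hsub : Ioo (0 : ℝ) τ ⊆ Ico 0 T := fun v hv => ⟨hv.1.le, hv.2.trans hτT⟩
        have t1 : Filter.Tendsto (fun v => ((zt' v, P' v) : RomState r q))
            (𝓝[Ioo (0 : ℝ) τ] τ) (𝓝 (zt' τ, P' τ)) := (hy'c τ hτIco).mono hsub
        have t2 : Filter.Tendsto sol (𝓝[Ioo (0 : ℝ) τ] τ) (𝓝 (sol τ)) :=
          (hsolc τ (Ico_subset_Icc_self hτIco)).mono (hsub.trans Ico_subset_Icc_self)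
        have hEq : sol =ᶠ[𝓝[Ioo (0 : ℝ) τ] τ] fun v => ((zt' v, P' v) : RomState r q) :=
          Filter.eventuallyEq_of_mem self_mem_nhdsWithin
            fun v hv => (hstep1 v hv.1.le hv.2).symm
        have t1' : Filter.Tendsto (fun v => ((zt' v, P' v) : RomState r q))
            (𝓝[Ioo (0 : ℝ) τ] τ) (𝓝 (sol τ)) := t2.congr' hEq
        exact tendsto_nhds_unique t1 t1'
    by_cases hτeq : τ = t
    · have h := hstep2
      rw [hτeq] at h
      exact ⟨congrArg Prod.fst h, congrArg Prod.snd h⟩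
    · exfalso
      have hτlt : τ < t := lt_of_le_of_ne hτt hτeq
      have hcw : ContinuousWithinAt (fun v => ((zt' v, P' v) : RomState r q)) (Ico 0 T) τ :=
        hy'c τ hτIco
      obtain ⟨δ, hδ0, hδ⟩ := Metric.continuousWithinAt_iff.mp hcw (R / 2) (by positivity)
      set b : ℝ := min (τ + δ / 2) t with hbdef
      have hτb : τ < b := lt_min (by linarith) hτlt
      have hbt : b ≤ t := min_le_right _ _
      have hb0 : 0 ≤ b := hτ0.trans hτb.le
      have hbT : b < T := lt_of_le_of_lt hbt htI.2
      have hy'τmem : ((zt' τ, P' τ) : RomState r q) ∈ Metric.closedBall y0 (R / 2) := by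
        rw [hstep2]
        exact hsolmem τ ⟨hτ0, hτT.le⟩
      have hmemB : ∀ v ∈ Icc (0 : ℝ) b,
          ((zt' v, P' v) : RomState r q) ∈ Metric.closedBall y0 R := by
        intro v hvb
        rcases le_or_gt v τ with hvτ | hvτ
        · rcases lt_or_eq_of_le hvτ with h | h
          · rw [hstep1 v hvb.1 h]
            exact hhalf (hsolmem v ⟨hvb.1, (hvτ.trans hτT.le)⟩)
          · rw [h]
            exact hhalf hy'τmem
        · have hvIco : v ∈ Ico (0 : ℝ) T := ⟨hvb.1, lt_of_le_of_lt hvb.2 hbT⟩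
          have hvd : dist v τ < δ := by
            rw [Real.dist_eq, abs_of_pos (sub_pos.mpr hvτ)]
            have hvb2 : v ≤ τ + δ / 2 := hvb.2.trans (min_le_left _ _)
            linarith
          have hdy := hδ hvIco hvd
          have h2 : dist ((zt' τ, P' τ) : RomState r q) y0 ≤ R / 2 :=
            Metric.mem_closedBall.mp hy'τmem
          have h3 := dist_triangle ((zt' v, P' v) : RomState r q)
            ((zt' τ, P' τ) : RomState r q) y0
          exact Metric.mem_closedBall.mpr (by linarith)
      have hIccb : Icc (0 : ℝ) b ⊆ Ico 0 T := fun u hu => ⟨hu.1, lt_of_le_of_lt hu.2 hbT⟩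
      have huniq : Set.EqOn (fun v => ((zt' v, P' v) : RomState r q)) sol (Icc 0 b) := by
        refine ODE_solution_unique_of_mem_Icc_right
          (v := fun _ => romVF g Dg Φ) (s := fun _ => Metric.closedBall y0 R) (K := K)
          (fun _ _ => hlipB) ?_ ?_ ?_ ?_ ?_ ?_ ?_
        · exact fun u hu => (hy'c u (hIccb hu)).mono hIccb
        · intro u hu
          have huI : u ∈ Ico (0 : ℝ) T := hIccb ⟨hu.1, hu.2.le⟩
          have hmem : Ico (0 : ℝ) T ∈ 𝓝[Ici u] u := by
            have h1 : Ici u ∩ Iio T ∈ 𝓝[Ici u] u :=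
              inter_mem_nhdsWithin _ (Iio_mem_nhds huI.2)
            exact Filter.mem_of_superset h1 fun w hw => ⟨huI.1.trans hw.1, hw.2⟩
          have hB : ((zt' u, P' u) : RomState r q) ∈ Metric.closedBall y0 R :=
            hmemB u ⟨hu.1, hu.2.le⟩
          have hder := (hy'd u huI).mono_of_mem_nhdsWithin hmem
          rwa [hkeygen zt' ztd' P' Pd' u (heq u huI) hB] at hder
        · exact fun u hu => hmemB u ⟨hu.1, hu.2.le⟩
        · exact fun u hu => (hsolc u ⟨hu.1, hu.2.trans hbT.le⟩).mono
            fun w hw => ⟨hw.1, hw.2.trans hbT.le⟩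
        · intro u hu
          have huI : u ∈ Icc (0 : ℝ) T := ⟨hu.1, (hu.2.trans hbT).le⟩
          have huT : u < T := lt_of_lt_of_le hu.2 hbT.le
          have hmem : Icc (0 : ℝ) T ∈ 𝓝[Ici u] u := by
            have h1 : Ici u ∩ Iio T ∈ 𝓝[Ici u] u :=
              inter_mem_nhdsWithin _ (Iio_mem_nhds huT)
            exact Filter.mem_of_superset h1 fun w hw => ⟨huI.1.trans hw.1, hw.2.le⟩
          exact (hsolderiv u huI).mono_of_mem_nhdsWithin hmem
        · exact fun u hu => hsolB u ⟨hu.1, (hu.2.trans hbT).le⟩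
        · rw [hy'0, hsol0]
      have hbS : b ∈ S := ⟨⟨hb0, hbt⟩, fun v hv => huniq hv⟩
      exact absurd (le_csSup hbdd hbS) (not_le.mpr hτb)


end CoupledROM
end

section
/- Let X be a real Hilbert space, Y a subspace of X, and let φ₁, …, φ_r ∈ Y be an orthonormal family. Let T : ℝ^q → B(X) be such that each T(η) is a surjective linear isometry, T is a group action (T(0) = Id_X, T(a)T(b) = T(a+b)), T(η)Y ⊆ Y, each map η ↦ T(η)φ_i is differentiable with derivative [T'(η)φ_i] ∈ L(ℝ^q, X), and let F : Y → X be equivariant with respect to T. Let p : [0, T) → ℝ^q be continuously differentiable. Then a differentiable function z̃ : [0, T) → ℝ^r satisfies, for all t and all i = 1, …, r, the projected equation ż̃_i(t) + Σ_{j=1}^r z̃_j(t) ⟨T(p(t))φ_i, [T'(p(t))φ_j] ṗ(t)⟩ = ⟨T(p(t))φ_i, F(Σ_{j=1}^r z̃_j(t) T(p(t))φ_j)⟩ if and only if it satisfies the symmetry-reduction (reference frame) reduced order model ż̃_i(t) = ⟨φ_i, F(Σ_{j=1}^r z̃_j(t) φ_j)⟩ − Σ_{j=1}^r z̃_j(t)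 ⟨φ_i, T(−p(t))([T'(p(t))φ_j] ṗ(t))⟩. -/
open scoped RealInnerProductSpace

/-- Equivalence of the Galerkin projection onto transformed
modes with the symmetry-reduction (reference frame) reduced order model: for a
group action `T` by surjective linear isometries leaving `Y` invariant, an
equivariant right-hand side `F`, orthonormal modes `φᵢ ∈ Y` with differentiable
transformations, and a continuously differentiable path `p`, a differentiable
coefficient function `z̃` satisfies the projected equation
`ż̃ᵢ + ∑ⱼ z̃ⱼ ⟪T(p)φᵢ, [T'(p)φⱼ]ṗ⟫ = ⟪T(p)φᵢ, F(∑ⱼ z̃ⱼ T(p)φⱼ)⟫`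
iff it satisfies the reference-frame reduced order model
`ż̃ᵢ = ⟪φᵢ, F(∑ⱼ z̃ⱼ φⱼ)⟫ − ∑ⱼ z̃ⱼ ⟪φᵢ, T(−p)([T'(p)φⱼ]ṗ)⟫`. -/
theorem galerkin_equiv_symmetry_reduction_rom
    {X : Type*} [NormedAddCommGroup X] [InnerProductSpace ℝ X]
    (q r : ℕ) (T : (Fin q → ℝ) → (X ≃ₗᵢ[ℝ] X))
    (hT0 : ∀ x : X, T 0 x = x)
    (hTadd : ∀ (a b : Fin q → ℝ) (x : X), T a (T b x) = T (a + b) x)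
    (Y : Submodule ℝ X) (hTY : ∀ (η : Fin q → ℝ), ∀ y ∈ Y, T η y ∈ Y)
    (φs : Fin r → X) (hon : Orthonormal ℝ φs) (hφY : ∀ i, φs i ∈ Y)
    (T' : (Fin q → ℝ) → Fin r → ((Fin q → ℝ) →L[ℝ] X))
    (hT' : ∀ (η : Fin q → ℝ) (i : Fin r),
      HasFDerivAt (fun η' => T η' (φs i)) (T' η i) η)
    (F : X → X) (hF : ∀ (η : Fin q → ℝ), ∀ y ∈ Y, F (T η y) = T η (F y))
    (Tf : ℝ) (p p' : ℝ → Fin q → ℝ)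
    (hp : ∀ t ∈ Set.Ico 0 Tf, HasDerivWithinAt p (p' t) (Set.Ico 0 Tf) t)
    (hp'cont : ContinuousOn p' (Set.Ico 0 Tf))
    (zt ztd : ℝ → Fin r → ℝ)
    (hzt : ∀ t ∈ Set.Ico 0 Tf, HasDerivWithinAt zt (ztd t) (Set.Ico 0 Tf) t) :
    (∀ t ∈ Set.Ico 0 Tf, ∀ i : Fin r,
        ztd t i + ∑ j, zt t j * ⟪T (p t) (φs i), T' (p t) j (p' t)⟫
          = ⟪T (p t) (φs i), F (∑ j, zt t j • T (p t) (φs j))⟫)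
    ↔ (∀ t ∈ Set.Ico 0 Tf, ∀ i : Fin r,
        ztd t i = ⟪φs i, F (∑ j, zt t j • φs j)⟫
          - ∑ j, zt t j * ⟪φs i, T (-(p t)) (T' (p t) j (p' t))⟫) := by
  have key : ∀ t (i : Fin r), (⟪T (p t) (φs i), F (∑ j, zt t j • T (p t) (φs j))⟫ : ℝ)
      = ⟪φs i, F (∑ j, zt t j • φs j)⟫ := by
    intro t i
    have hw : (∑ j, zt t j • φs j) ∈ Y :=
      Submodule.sum_mem _ fun j _ => Submodule.smul_mem _ _ (hφY j)
    have hs : (∑ j, zt t j • T (p t) (φs j)) = T (p t) (∑ j, zt t j • φs j) := by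
      simp [map_sum, map_smul]
    rw [hs, hF _ _ hw, (T (p t)).inner_map_map]
  have key2 : ∀ t (i j : Fin r), (⟪T (p t) (φs i), T' (p t) j (p' t)⟫ : ℝ)
      = ⟪φs i, T (-(p t)) (T' (p t) j (p' t))⟫ := by
    intro t i j
    have h1 : T (p t) (T (-(p t)) (T' (p t) j (p' t))) = T' (p t) j (p' t) := by
      rw [hTadd]; simp [hT0]
    rw [← h1, (T (p t)).inner_map_map]
    rw [h1]
  constructor <;> intro h t ht i <;> have := h t ht i <;>
    simp only [key, key2] at this ⊢ <;> linarith
end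

section
/- Let X be a real Hilbert space, Y a subspace of X, φ₁, …, φ_r ∈ Y an orthonormal family, T : ℝ^q → B(X) a group action by surjective linear isometries with T(η)Y ⊆ Y and each η ↦ T(η)φ_i differentiable with derivative [T'(η)φ_i] ∈ L(ℝ^q, X), and F : Y → X equivariant with respect to T. Fix p ∈ ℝ^q and ṽ ∈ ℝ^r, and for η ∈ ℝ^q define d_i(η) := ⟨φ_i, F(Σ_j ṽ_j φ_j)⟩ − Σ_j ṽ_j ⟨φ_i, T(−p)([T'(p)φ_j]η)⟩ for i = 1, …, r, the residual R(η) := Σ_i d_i(η) φ_i − F(Σ_i ṽ_i φ_i) + Σ_i ṽ_i T(−p)([T'(p)φ_i]η), and the cost J(η) := (1/2)‖R(η)‖²_X + (1/2)Σ_{i=1}^r d_i(η)². Then for every η ∈ ℝ^q one has the identity J(η) = (1/2)‖ Σ_{i=1}^r ṽ_i [T'(p)φ_i]η − F(Σ_{j=1}^r ṽ_j T(p)φ_j) ‖²_X, and consequently η is a critical point of J (i.e., the derivative of J at η vanishes) if and only if η satisfies the freezing phase condition: for every k = 1, …, q, ⟨ Σ_i ṽ_i [T'(p)φ_i]e_k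 , Σ_i ṽ_i [T'(p)φ_i]η − F(Σ_j ṽ_j T(p)φ_j) ⟩ = 0. -/
open scoped RealInnerProductSpace

/-- The freezing cost
`J(η) = ½‖R(η)‖² + ½∑ᵢ dᵢ(η)²` associated with the reference-frame reduced
order model satisfies the identity
`J(η) = ½‖∑ᵢ ṽᵢ [T'(p)φᵢ]η − F(∑ⱼ ṽⱼ T(p)φⱼ)‖²`, and hence `η` is a critical
point of `J` iff it satisfies the freezing phase condition. -/
theorem freezing_phase_condition_characterization
    {X : Type*} [NormedAddCommGroup X] [InnerProductSpace ℝ X]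
    (q r : ℕ) (T : (Fin q → ℝ) → (X ≃ₗᵢ[ℝ] X))
    (hT0 : ∀ x : X, T 0 x = x)
    (hTadd : ∀ (a b : Fin q → ℝ) (x : X), T a (T b x) = T (a + b) x)
    (Y : Submodule ℝ X) (hTY : ∀ (η : Fin q → ℝ), ∀ y ∈ Y, T η y ∈ Y)
    (φs : Fin r → X) (hon : Orthonormal ℝ φs) (hφY : ∀ i, φs i ∈ Y)
    (F : X → X) (hF : ∀ (η : Fin q → ℝ), ∀ y ∈ Y, F (T η y) = T η (F y))
    (p : Fin q → ℝ) (Tp' : Fin r → ((Fin q → ℝ) →L[ℝ] X))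
    (hTp' : ∀ i, HasFDerivAt (fun η => T η (φs i)) (Tp' i) p)
    (vt : Fin r → ℝ)
    (d : Fin r → (Fin q → ℝ) → ℝ)
    (hd : ∀ (i : Fin r) (η : Fin q → ℝ),
      d i η = ⟪φs i, F (∑ j, vt j • φs j)⟫ - ∑ j, vt j * ⟪φs i, T (-p) (Tp' j η)⟫)
    (R : (Fin q → ℝ) → X)
    (hR : ∀ η, R η = ∑ i, d i η • φs i - F (∑ i, vt i • φs i)
        + ∑ i, vt i • T (-p) (Tp' i η))
    (Jc : (Fin q → ℝ) → ℝ)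
    (hJc : ∀ η, Jc η = (1 / 2) * ‖R η‖ ^ 2 + (1 / 2) * ∑ i, (d i η) ^ 2) :
    (∀ η : Fin q → ℝ,
      Jc η = (1 / 2) * ‖∑ i, vt i • Tp' i η - F (∑ j, vt j • T p (φs j))‖ ^ 2) ∧
    (∀ η : Fin q → ℝ,
      HasFDerivAt Jc (0 : (Fin q → ℝ) →L[ℝ] ℝ) η ↔
        ∀ k : Fin q,
          ⟪∑ i, vt i • Tp' i (Pi.single k 1),
            ∑ i, vt i • Tp' i η - F (∑ j, vt j • T p (φs j))⟫ = 0) := by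
  classical
  set G : X := F (∑ j, vt j • φs j) with hG
  set c : X := F (∑ j, vt j • T p (φs j)) with hc
  set A : (Fin q → ℝ) →L[ℝ] X := ∑ i, vt i • Tp' i with hA
  have hAapp : ∀ η : Fin q → ℝ, A η = ∑ i, vt i • Tp' i η := by
    intro η
    simp [hA, ContinuousLinearMap.sum_apply]
  have hTpTnegp : ∀ x : X, T p (T (-p) x) = x := by
    intro x; rw [hTadd]; simp [hT0]
  have hsumY : (∑ j, vt j • φs j) ∈ Y :=
    Submodule.sum_mem _ fun j _ => Y.smul_mem _ (hφY j)
  have hTpG : T p G = c := by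
    rw [hG, ← hF p _ hsumY]
    congr 1
    rw [map_sum]
    exact Finset.sum_congr rfl fun j _ => by rw [map_smul]
  have hu : ∀ η : Fin q → ℝ,
      T p (G - ∑ i, vt i • T (-p) (Tp' i η)) = c - ∑ i, vt i • Tp' i η := by
    intro η
    rw [map_sub, hTpG, map_sum]
    congr 1
    exact Finset.sum_congr rfl fun i _ => by rw [map_smul, hTpTnegp]
  have key : ∀ (cf : Fin r → ℝ) (u : X), (∀ i, cf i = ⟪φs i, u⟫) →
      ‖(∑ i, cf i • φs i) - u‖ ^ 2 + ∑ i, (cf i) ^ 2 = ‖u‖ ^ 2 := by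
    intro cf u hcf
    have hs : ⟪∑ i, cf i • φs i, u⟫ = ∑ i, cf i ^ 2 := by
      rw [sum_inner]
      exact Finset.sum_congr rfl fun i _ => by
        rw [real_inner_smul_left, ← hcf i, sq]
    have hss : ‖∑ i, cf i • φs i‖ ^ 2 = ∑ i, cf i ^ 2 := by
      rw [← real_inner_self_eq_norm_sq, sum_inner]
      exact Finset.sum_congr rfl fun i _ => by
        rw [real_inner_smul_left, hon.inner_right_fintype, sq]
    rw [norm_sub_sq_real, hss, hs]
    ring
  have part1 : ∀ η : Fin q → ℝ,
      Jc η = (1 / 2) * ‖∑ i, vt i • Tp' i η - c‖ ^ 2 := by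
    intro η
    have hdi : ∀ i, d i η = ⟪φs i, G - ∑ j, vt j • T (-p) (Tp' j η)⟫ := by
      intro i
      rw [hd, inner_sub_right, inner_sum]
      congr 1
      exact Finset.sum_congr rfl fun j _ => by rw [real_inner_smul_right]
    have hRu : R η = (∑ i, d i η • φs i) - (G - ∑ i, vt i • T (-p) (Tp' i η)) := by
      rw [hR, hG]; abel
    have hk := key (fun i => d i η) (G - ∑ j, vt j • T (-p) (Tp' j η)) hdi
    have h2 : ‖G - ∑ j, vt j • T (-p) (Tp' j η)‖ ^ 2
        = ‖∑ i, vt i • Tp' i η - c‖ ^ 2 := by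
      rw [← (T p).norm_map (G - ∑ j, vt j • T (-p) (Tp' j η)), hu η, norm_sub_rev]
    rw [hJc, hRu]
    rw [h2] at hk
    linarith
  refine ⟨part1, ?_⟩
  intro η
  have hJeq : Jc = fun t => (1 / 2) * ⟪A t - c, A t - c⟫ := by
    funext t
    rw [part1 t, real_inner_self_eq_norm_sq, hAapp]
  have hg : HasFDerivAt (fun t : Fin q → ℝ => A t - c) A η :=
    A.hasFDerivAt.sub_const c
  set D : (Fin q → ℝ) →L[ℝ] ℝ :=
    (1 / 2 : ℝ) • ((fderivInnerCLM ℝ (A η - c, A η - c)).comp (A.prod A)) with hDdef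
  have hD : HasFDerivAt Jc D η := by
    rw [hJeq]
    exact (hg.inner ℝ hg).const_mul (1 / 2)
  have hDapp : ∀ h : Fin q → ℝ, D h = ⟪A h, A η - c⟫ := by
    intro h
    simp only [hDdef, ContinuousLinearMap.smul_apply, ContinuousLinearMap.comp_apply,
      ContinuousLinearMap.prod_apply, fderivInnerCLM_apply]
    rw [real_inner_comm (A η - c) (A h)]
    simp only [smul_eq_mul]
    ring
  constructor
  · intro h0 k
    have huniq : (0 : (Fin q → ℝ) →L[ℝ] ℝ) = D := h0.unique hD
    have h1 : D (Pi.single k 1) = 0 := by rw [← huniq]; rfl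
    rw [hDapp] at h1
    rw [← hAapp, ← hAapp]
    exact h1
  · intro hcond
    have hDzero : D = 0 := by
      ext h
      rw [hDapp]
      have hh : (h : Fin q → ℝ) = ∑ k, h k • (Pi.single k 1 : Fin q → ℝ) := by
        ext j
        simp [Pi.single_apply]
      rw [hh, map_sum, sum_inner]
      refine Finset.sum_eq_zero fun k _ => ?_
      rw [map_smul, real_inner_smul_left]
      have := hcond k
      rw [← hAapp, ← hAapp] at this
      rw [this, mul_zero]
    rw [← hDzero]
    exact hD
end

section
/- Let r ∈ ℕ, let A ∈ ℝ^{r×r} be invertible, N ∈ ℝ^{r×r}, B ∈ ℝ^{r×r}, and suppose the symmetric block matrix [[A, N], [Nᵀ, B]] ∈ ℝ^{2r×2r} is invertible. Let D ∈ ℝ^{r×r} be invertible and let e ∈ ℝ^r be arbitrary. If x, u ∈ ℝ^r satisfy A x + N D u = N D e and Dᵀ Nᵀ x + Dᵀ B D u = Dᵀ B D e, then u = e and x = 0. -/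
open Matrix

/-- Linear-algebra core of the claim that the
residual-minimizing reduced order model for the advection equation forces the
path velocity to equal the transport velocity: if `A` and the symmetric block
matrix `[[A, N], [Nᵀ, B]]` are invertible, `D` is invertible, and `x, u`
satisfy `A x + N D u = N D e` and `Dᵀ Nᵀ x + Dᵀ B D u = Dᵀ B D e`, then
`u = e` and `x = 0`. -/
theorem rom_path_velocity_equals_transport
    (r : ℕ) (A N B D : Matrix (Fin r) (Fin r) ℝ)
    (hA : IsUnit A)
    (hblock : IsUnit (Matrix.fromBlocks A N Nᵀ B))
    (hD : IsUnit D)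
    (e x u : Fin r → ℝ)
    (h1 : A.mulVec x + N.mulVec (D.mulVec u) = N.mulVec (D.mulVec e))
    (h2 : Dᵀ.mulVec (Nᵀ.mulVec x) + Dᵀ.mulVec (B.mulVec (D.mulVec u))
        = Dᵀ.mulVec (B.mulVec (D.mulVec e))) :
    u = e ∧ x = 0 := by
  obtain ⟨iA⟩ := hA.nonempty_invertible
  obtain ⟨iblock⟩ := hblock.nonempty_invertible
  obtain ⟨iD⟩ := hD.nonempty_invertible
  obtain ⟨v, hv⟩ : ∃ v, v = D.mulVec (u - e) := ⟨_, rfl⟩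
  have hDv : v = D.mulVec u - D.mulVec e := by simp [hv, mulVec_sub]
  -- From h1 : A x + N v = 0
  have h1' : A.mulVec x + N.mulVec v = 0 := by
    rw [hDv, mulVec_sub]
    have := h1
    abel_nf
    abel_nf at this
    linear_combination (norm := module) this
  -- From h2 : Dᵀ (Nᵀ x + B v) = 0, hence Nᵀ x + B v = 0
  have hDT : IsUnit Dᵀ := (isUnit_transpose D).mpr hD
  have h2' : Nᵀ.mulVec x + B.mulVec v = 0 := by
    have hinj := mulVec_injective_iff_isUnit.mpr hDT
    apply hinj
    rw [mulVec_add, mulVec_zero]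
    rw [hDv, mulVec_sub, mulVec_sub]
    linear_combination (norm := module) h2
  -- x = -⅟A (N v)
  have hx : x = -(⅟A).mulVec (N.mulVec v) := by
    have : A.mulVec x = -(N.mulVec v) := by linear_combination (norm := module) h1'
    calc x = (⅟A).mulVec (A.mulVec x) := by
              rw [mulVec_mulVec, invOf_mul_self, one_mulVec]
      _ = -(⅟A).mulVec (N.mulVec v) := by rw [this, mulVec_neg]
  -- Schur complement invertible
  letI iS : Invertible (B - Nᵀ * ⅟A * N) :=
    Matrix.invertibleOfFromBlocks₁₁Invertible A N Nᵀ B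
  have hSv : (B - Nᵀ * ⅟A * N).mulVec v = 0 := by
    rw [sub_mulVec]
    have : (Nᵀ * ⅟A * N).mulVec v = Nᵀ.mulVec ((⅟A).mulVec (N.mulVec v)) := by
      rw [mulVec_mulVec, mulVec_mulVec]
    rw [this]
    have hx' : Nᵀ.mulVec x = -(Nᵀ.mulVec ((⅟A).mulVec (N.mulVec v))) := by
      rw [hx, mulVec_neg]
    linear_combination (norm := module) h2' - hx'
  have hvz : v = 0 := by
    have := (B - Nᵀ * ⅟A * N).mulVec_injective_of_invertible
    apply this
    rw [hSv, mulVec_zero]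
  have hue : u = e := by
    have hinj := D.mulVec_injective_of_invertible
    have : D.mulVec (u - e) = D.mulVec 0 := by rw [mulVec_zero, ← hv, hvz]
    have := hinj this
    exact sub_eq_zero.mp this
  refine ⟨hue, ?_⟩
  rw [hx, hvz, mulVec_zero, mulVec_zero, neg_zero]
end
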